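/- For every natural number m, every a ∈ R and every 2 ≤ k ≤ n, the following identities hold in R S_n: (a) σ_k L_k^m = L_{k−1}^m σ_k + Σ_{i=0}^{m−1} L_{k−1}^i L_k^{m−i−1}; (b) σ_k (L_k − a)^m = (L_{k−1} − a)^m σ_k + Σ_{i=0}^{m−1} (L_{k−1} − a)^i (L_k − a)^{m−i−1}. -/

import Mathlib

set_option synthInstance.maxHeartbeats 1000000
set_option maxHeartbeats 1000000
open scoped BigOperators

namespace SymmJM

/-! # Common setup

Fix a prime `p` and a positive integer `n`.  We formalize: the group algebra of the
symmetric group `Sₙ` over `ℚ`, over the localization `R = ℤ_(p)` (realized as a subring of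
`ℚ`) and over `𝔽_p = ZMod p`; Young diagrams and tableaux; Jucys–Murphy elements and
idempotents; Murphy's standard basis; residues, `p`-equivalence and class idempotents. -/

/-- The symmetric group on `n` letters (the letter `m ∈ {1, …, n}` corresponds to the
index `m - 1 : Fin n`). -/
abbrev SG (n : ℕ) := Equiv.Perm (Fin n)

/-- The group algebra of the symmetric group `Sₙ` over a commutative ring `k`. -/
abbrev GA (k : Type) [CommRing k] (n : ℕ) := MonoidAlgebra k (SG n)

/-- A rational number lies in the localization `R = ℤ_(p)` of `ℤ` at `(p)` if and only if
`p` does not divide its reduced denominator. -/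
def IsPLoc (p : ℕ) (q : ℚ) : Prop := ¬ p ∣ q.den

/-- An element of `ℚSₙ` lies in `RSₙ` (with `R = ℤ_(p)`) iff all its coefficients do. -/
def InRSn (p : ℕ) {n : ℕ} (x : GA ℚ n) : Prop := ∀ g : SG n, IsPLoc p (x.coeff g)

/-- The localization `R` of `ℤ` at the prime ideal `(p)`, realized as the subring of `ℚ`
of rationals whose reduced denominator is prime to `p`. -/
def Rloc (p : ℕ) (hp : p.Prime) : Subring ℚ where
  carrier := {q : ℚ | ¬ p ∣ q.den}
  zero_mem' := by
    simp only [Set.mem_setOf_eq, Rat.den_zero, Nat.dvd_one]; exact hp.ne_one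
  one_mem' := by
    simp only [Set.mem_setOf_eq, Rat.den_one, Nat.dvd_one]; exact hp.ne_one
  add_mem' := by
    intro a b ha hb hd
    rcases (hp.dvd_mul.mp (hd.trans (Rat.add_den_dvd a b))) with h | h
    exacts [ha h, hb h]
  mul_mem' := by
    intro a b ha hb hd
    rcases (hp.dvd_mul.mp (hd.trans (Rat.mul_den_dvd a b))) with h | h
    exacts [ha h, hb h]
  neg_mem' := by
    intro a ha hd
    rw [Rat.den_neg_eq_den] at hd; exact ha hd

/-- The Jucys–Murphy element `L_k` (where `k = i + 1` in the 1-based indexing of the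
paper): `L_k = (1,k) + (2,k) + ⋯ + (k-1,k)`, so in particular `L_1 = 0`. -/
noncomputable def jm (k : Type) [CommRing k] (n : ℕ) (i : Fin n) : GA k n :=
  ∑ j ∈ Finset.univ.filter (fun j : Fin n => j < i),
    MonoidAlgebra.of k (SG n) (Equiv.swap j i)

/-- A tableau with `n` boxes: a Young diagram `shape` with `n` cells together with a
bijective filling of the cells by `1, …, n` (realized as `Fin n`). -/
structure Tab (n : ℕ) where
  shape : YoungDiagram
  card_eq : shape.cells.card = n
  filling : {c : ℕ × ℕ // c ∈ shape.cells} ≃ Fin n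

/-- The residue (content) `r_t(k) = j - i` of the letter `k` in the tableau `t`, where
`k` occupies the cell `[i,j]` of `t` (matrix conventions, `0`-based). -/
def Tab.res {n : ℕ} (t : Tab n) (k : Fin n) : ℤ :=
  ((t.filling.symm k).1.2 : ℤ) - ((t.filling.symm k).1.1 : ℤ)

/-- The (0-based) row number of the cell of `t` containing the letter `k`. -/
def Tab.rowOf {n : ℕ} (t : Tab n) (k : Fin n) : ℕ := (t.filling.symm k).1.1

/-- A tableau is standard if its entries increase along rows and columns. -/
def Tab.Standard {n : ℕ} (t : Tab n) : Prop :=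
  ∀ c c' : {c : ℕ × ℕ // c ∈ t.shape.cells},
    c.1.1 ≤ c'.1.1 → c.1.2 ≤ c'.1.2 → c ≠ c' → t.filling c < t.filling c'

/-- The (right) action of `σ ∈ Sₙ` on tableaux: each entry is replaced by its image
under `σ`. -/
def Tab.act {n : ℕ} (t : Tab n) (σ : SG n) : Tab n :=
  ⟨t.shape, t.card_eq, t.filling.trans σ⟩

/-- The row-reading enumeration of the cells of a Young diagram with `n` cells:
cells are enumerated in lexicographic (row-by-row) order. -/
noncomputable def rowEnum (n : ℕ) (μ : YoungDiagram) (h : μ.cells.card = n) :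
    {c : ℕ × ℕ // c ∈ μ.cells} ≃ Fin n :=
  (Equiv.subtypeEquiv (toLex : ℕ × ℕ ≃ ℕ ×ₗ ℕ)
      (fun c => by simp [Finset.mem_map_equiv])).trans
    ((μ.cells.map (toLex : ℕ × ℕ ≃ ℕ ×ₗ ℕ).toEmbedding).orderIsoOfFin
      (by rw [Finset.card_map, h])).toEquiv.symm

/-- The column-reading enumeration of the cells of a Young diagram with `n` cells. -/
noncomputable def colEnum (n : ℕ) (μ : YoungDiagram) (h : μ.cells.card = n) :
    {c : ℕ × ℕ // c ∈ μ.cells} ≃ Fin n :=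
  (Equiv.subtypeEquiv ((Equiv.prodComm ℕ ℕ).trans (toLex : ℕ × ℕ ≃ ℕ ×ₗ ℕ))
      (fun c => by simp [Finset.mem_map_equiv])).trans
    ((μ.cells.map ((Equiv.prodComm ℕ ℕ).trans
        (toLex : ℕ × ℕ ≃ ℕ ×ₗ ℕ)).toEmbedding).orderIsoOfFin
      (by rw [Finset.card_map, h])).toEquiv.symm

/-- The row-reading (highest) tableau `t^λ`: `1, 2, …, n` filled in along the rows. -/
noncomputable def rowTab (n : ℕ) (μ : YoungDiagram) (h : μ.cells.card = n) : Tab n :=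
  ⟨μ, h, rowEnum n μ h⟩

/-- The column-reading (lowest) tableau `t_λ`: `1, 2, …, n` filled in along the columns. -/
noncomputable def colTab (n : ℕ) (μ : YoungDiagram) (h : μ.cells.card = n) : Tab n :=
  ⟨μ, h, colEnum n μ h⟩

/-- The permutation `d(t)`, defined by `t^λ · d(t) = t`. -/
noncomputable def dPerm {n : ℕ} (t : Tab n) : SG n :=
  ((rowTab n t.shape t.card_eq).filling.symm).trans t.filling

/-- For `i` the index corresponding to the letter `k`, `predIdx i` corresponds to the
letter `k - 1`. -/
def predIdx {n : ℕ} (i : Fin n) : Fin n :=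
  ⟨i.val - 1, lt_of_le_of_lt (Nat.sub_le _ _) i.isLt⟩

/-- The simple transposition `σ_k = (k-1, k)`, where `i` is the index of the letter `k`. -/
def adjSwap {n : ℕ} (i : Fin n) : SG n := Equiv.swap (predIdx i) i

/-- The Jucys–Murphy idempotent `E_t ∈ ℚSₙ` of a tableau `t`:
`E_t = ∏_{-n<c<n} ∏_{i : r_t(i) ≠ c} (L_i - c)/(r_t(i) - c)`. -/
noncomputable def Ejm {n : ℕ} (t : Tab n) : GA ℚ n :=
  (((List.range (2 * n - 1)).map (fun c0 : ℕ => (c0 : ℤ) - ((n : ℤ) - 1))).map (fun c : ℤ =>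
    (((List.finRange n).filter (fun i => decide (t.res i ≠ c))).map (fun i =>
      ((t.res i : ℚ) - (c : ℚ))⁻¹ • (jm ℚ n i - (c : ℚ) • (1 : GA ℚ n)))).prod)).prod

/-- Murphy's element `F_t ∈ RSₙ`:
`F_t = ∏_{-n<c<n} ∏_{i : r_t(i) ≢ c mod p} (L_i - c)/(r_t(i) - c)`. -/
noncomputable def Fjm (p : ℕ) {n : ℕ} (t : Tab n) : GA ℚ n :=
  (((List.range (2 * n - 1)).map (fun c0 : ℕ => (c0 : ℤ) - ((n : ℤ) - 1))).map (fun c : ℤ =>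
    (((List.finRange n).filter (fun i => decide (¬ (p : ℤ) ∣ (t.res i - c)))).map (fun i =>
      ((t.res i : ℚ) - (c : ℚ))⁻¹ • (jm ℚ n i - (c : ℚ) • (1 : GA ℚ n)))).prod)).prod

/-- The denominator `w^λ` of `F_t`:
`w^λ = ∏_{-n<c<n} ∏_{i : r_t(i) ≢ c mod p} (r_t(i) - c)`; it depends only on the shape
`λ` of `t`. -/
def wDen (p : ℕ) {n : ℕ} (t : Tab n) : ℤ :=
  (((List.range (2 * n - 1)).map (fun c0 : ℕ => (c0 : ℤ) - ((n : ℤ) - 1))).map (fun c : ℤ =>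
    (((List.finRange n).filter (fun i => decide (¬ (p : ℤ) ∣ (t.res i - c)))).map (fun i =>
      t.res i - c)).prod)).prod

/-- `p`-equivalence of tableaux: `s ∼_p t` iff all residues agree modulo `p`. -/
def pEquiv (p : ℕ) {n : ℕ} (s t : Tab n) : Prop :=
  ∀ k : Fin n, (p : ℤ) ∣ (s.res k - t.res k)

instance (p : ℕ) {n : ℕ} (s t : Tab n) : Decidable (pEquiv p s t) := by
  unfold pEquiv; infer_instance

/-- The tableau-class idempotent `E_T = ∑_{s ∈ T} E_s`, where `T = [t]` is the
`p`-equivalence class of the standard tableau `t` (the sum runs over the standard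
tableaux in the class). -/
noncomputable def Eclass (p : ℕ) {n : ℕ} (t : Tab n) : GA ℚ n :=
  ∑ᶠ s ∈ {s : Tab n | s.Standard ∧ pEquiv p s t}, Ejm s

/-- Reduction modulo `p` of a `p`-integral rational number. -/
noncomputable def redQ (p : ℕ) (q : ℚ) : ZMod p := (q.num : ZMod p) * ((q.den : ZMod p))⁻¹

/-- Reduction modulo `p` of an element of `ℚSₙ` with `p`-integral coefficients, landing
in `𝔽_p Sₙ`. -/
noncomputable def redA (p : ℕ) {n : ℕ} (x : GA ℚ n) : GA (ZMod p) n :=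
  MonoidAlgebra.ofCoeff (Finsupp.mapRange (redQ p) (by simp [redQ]) x.coeff)

/-- `σ` belongs to the row stabilizer `S_t` of the tableau `t`. -/
def IsRowStab {n : ℕ} (t : Tab n) (σ : SG n) : Prop :=
  ∀ k : Fin n, t.rowOf (σ k) = t.rowOf k

instance {n : ℕ} (t : Tab n) : DecidablePred (IsRowStab t) := fun σ => by
  unfold IsRowStab; infer_instance

/-- `x_t = ∑_{σ ∈ S_t} σ`, the sum over the row stabilizer of the tableau `t`. -/
noncomputable def xEl (k : Type) [CommRing k] {n : ℕ} (t : Tab n) : GA k n :=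
  ∑ σ ∈ Finset.univ.filter (fun σ : SG n => IsRowStab t σ), MonoidAlgebra.of k (SG n) σ

/-- `y_t = ∑_{σ ∈ S_t} (-1)^{|σ|} σ`, the signed sum over the row stabilizer of `t`. -/
noncomputable def yEl (k : Type) [CommRing k] {n : ℕ} (t : Tab n) : GA k n :=
  ∑ σ ∈ Finset.univ.filter (fun σ : SG n => IsRowStab t σ),
    ((Equiv.Perm.sign σ : ℤ) • MonoidAlgebra.of k (SG n) σ)

/-- Murphy's element `ξ_λ = ∏_{i=1}^n (L_i + ρ_λ(i))`, where `ρ_λ(i)` is the (1-based) row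
number of the letter `i` in the tableau `t` (used with `t = t^λ`). -/
noncomputable def xiEl (k : Type) [CommRing k] {n : ℕ} (t : Tab n) : GA k n :=
  ((List.finRange n).map
      (fun i => jm k n i + ((t.rowOf i + 1 : ℕ) : k) • (1 : GA k n))).prod

/-- Murphy's standard basis element `x_{st} = d(s)⁻¹ x_λ d(t)` (for `s, t` of the same
shape `λ`). -/
noncomputable def xstEl (k : Type) [CommRing k] {n : ℕ} (s t : Tab n) : GA k n :=
  MonoidAlgebra.of k (SG n) (dPerm s)⁻¹ * xEl k (rowTab n s.shape s.card_eq) *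
    MonoidAlgebra.of k (SG n) (dPerm t)

/-- The anti-automorphism `*` of the group algebra fixing the transpositions, i.e.
`g ↦ g⁻¹` extended linearly. -/
noncomputable def starE (k : Type) [CommRing k] {n : ℕ} (x : GA k n) : GA k n :=
  MonoidAlgebra.ofCoeff (Finsupp.equivMapDomain (Equiv.inv (SG n)) x.coeff)

/-- The number of cells of `A` in row `i`. -/
def rowCount (A : Finset (ℕ × ℕ)) (i : ℕ) : ℕ := (A.filter (fun c => c.1 = i)).card

/-- `A` dominates `B`: all partial row sums of `A` are at least those of `B`. -/
def DomCells (A B : Finset (ℕ × ℕ)) : Prop :=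
  ∀ m : ℕ, ∑ i ∈ Finset.range m, rowCount B i ≤ ∑ i ∈ Finset.range m, rowCount A i

/-- The dominance order on Young diagrams: `DomDiag μ ν` means `ν ⊴ μ`. -/
def DomDiag (μ ν : YoungDiagram) : Prop := DomCells μ.cells ν.cells

/-- Strict dominance of Young diagrams: `StrictDomDiag μ ν` means `ν ◁ μ`. -/
def StrictDomDiag (μ ν : YoungDiagram) : Prop := DomDiag μ ν ∧ μ ≠ ν

/-- The set of cells of `t` containing an entry `< m`, i.e. the shape of the restriction
of `t` to its first `m` entries. -/
def Tab.restr {n : ℕ} (t : Tab n) (m : ℕ) : Finset (ℕ × ℕ) :=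
  (t.shape.cells.attach.filter (fun c => (t.filling c).val < m)).image Subtype.val

/-- The dominance order on tableaux (viewing tableaux as sequences of shapes):
`TabLe s s'` means `s ⊴ s'`. -/
def TabLe {n : ℕ} (s s' : Tab n) : Prop :=
  ∀ m : ℕ, DomCells (s'.restr m) (s.restr m)

/-- The strong dominance order on pairs of tableaux: `(s,t) ⊴ (u,v)` iff `s ⊴ u` and
`t ⊴ v`. -/
def PairLe {n : ℕ} (st uv : Tab n × Tab n) : Prop := TabLe st.1 uv.1 ∧ TabLe st.2 uv.2

/-- Strict strong dominance on pairs of tableaux: `PairLt st uv` means `st ◁ uv`. -/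
def PairLt {n : ℕ} (st uv : Tab n × Tab n) : Prop := PairLe st uv ∧ st ≠ uv

/-- The order `≽` on pairs of tableaux: `(σ,τ) ≽ (s,t)` iff either the shapes are equal
and `(σ,τ) ⊵ (s,t)` in the strong dominance order, or `Shape σ` strictly dominates
`Shape s`. -/
def Succeq {n : ℕ} (uv st : Tab n × Tab n) : Prop :=
  (uv.1.shape = st.1.shape ∧ PairLe st uv) ∨ StrictDomDiag uv.1.shape st.1.shape

/-- The strict order `≻` on pairs of tableaux. -/
def SuccStrict {n : ℕ} (uv st : Tab n × Tab n) : Prop := Succeq uv st ∧ uv ≠ st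

/-- `λ` is `p`-restricted: successive row lengths differ by less than `p`. -/
def PRestr (p : ℕ) (μ : YoungDiagram) : Prop :=
  ∀ i : ℕ, μ.rowLen i - μ.rowLen (i + 1) < p

/-- Apply a word of simple transpositions successively to a tableau. -/
def applyList {n : ℕ} (t : Tab n) : List (Fin n) → Tab n
  | [] => t
  | i :: rest => applyList (t.act (adjSwap i)) rest

/-- `l` is a reduced expression `σ_{i_1} ⋯ σ_{i_N}` for the permutation taking the
tableau `t0` to `t1` (encoded through its successive action on tableaux): it consists of
simple transpositions, takes `t0` to `t1`, and has minimal length among such words. -/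
def IsRWord {n : ℕ} (t0 t1 : Tab n) (l : List (Fin n)) : Prop :=
  (∀ i ∈ l, 1 ≤ i.val) ∧ applyList t0 l = t1 ∧
    ∀ l' : List (Fin n), (∀ i ∈ l', 1 ≤ i.val) → applyList t0 l' = t1 →
      l.length ≤ l'.length

/-- `h_L(k) = L_{k-1} - L_k` over `𝔽_p`. -/
noncomputable def hLF (p : ℕ) (n : ℕ) (i : Fin n) : GA (ZMod p) n :=
  jm (ZMod p) n (predIdx i) - jm (ZMod p) n i

/-- The inverse `1/h_L(k)` of the action of `h_L(k)` on the relevant right ideal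
`E_U(𝔽_p Sₙ)`, realized by its (finite) geometric series
`∑_m (-1)^m h^{-(m+1)} (h_L - h)^m`, where `h ∈ 𝔽_p` is the residue difference of the
class `U`; the element `h_L - h` acts nilpotently on the ideal, with nilpotency degree at
most `dim 𝔽_p Sₙ = n!`. -/
noncomputable def hLinv (p : ℕ) (n : ℕ) (i : Fin n) (h : ZMod p) : GA (ZMod p) n :=
  ∑ m ∈ Finset.range (n.factorial + 1),
    ((-1 : ZMod p) ^ m * (h⁻¹) ^ (m + 1)) • (hLF p n i - h • (1 : GA (ZMod p) n)) ^ m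

/-- The residue difference `h_{U,k} = r_U(k-1) - r_U(k) ∈ 𝔽_p`, computed from the
representative `u` of the class `U`. -/
noncomputable def hres (p : ℕ) {n : ℕ} (u : Tab n) (i : Fin n) : ZMod p :=
  ((u.res (predIdx i) - u.res i : ℤ) : ZMod p)

/-- The intertwiner `Ψ_{L,d(t)} = (σ_{i_1} - 1/h_L(i_1)) ⋯ (σ_{i_N} - 1/h_L(i_N))`
attached to a word `i_1, …, i_N` and the associated chain of tableaux starting at `tcur`;
the factor `1/h_L(i_j)` is set to `1` when the `j`-th and `(j+1)`-st tableaux of the chain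
lie in the same class, and otherwise is the inverse of the action of `h_L(i_j)` on
`E_U (𝔽_p Sₙ)`, `U` being the class of the `(j+1)`-st tableau of the chain. -/
noncomputable def PsiElt (p : ℕ) {n : ℕ} (tcur : Tab n) : List (Fin n) → GA (ZMod p) n
  | [] => 1
  | i :: rest =>
      (if pEquiv p tcur (tcur.act (adjSwap i)) then
         MonoidAlgebra.of (ZMod p) (SG n) (adjSwap i) - 1
       else
         MonoidAlgebra.of (ZMod p) (SG n) (adjSwap i) -
           hLinv p n i (hres p (tcur.act (adjSwap i)) i)) *
      PsiElt p (tcur.act (adjSwap i)) rest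

/-- The inclusion `R Sₙ → ℚ Sₙ`. -/
noncomputable def incR (p : ℕ) (hp : p.Prime) {n : ℕ} (x : GA (Rloc p hp) n) : GA ℚ n :=
  MonoidAlgebra.ofCoeff (Finsupp.mapRange Subtype.val rfl x.coeff)

/-! The summand `(k-1,k)` of `L_k` is `σ_k` itself, and `σ_k` conjugates every other
summand `(l,k)` into the summand `(l,k-1)` of `L_{k-1}`; hence `σ_k L_k = L_{k-1} σ_k + 1`.
Both identities are the power formula for a relation `σ X = Y σ + 1` in any ring, which
persists when the same element commuting with `σ` is subtracted from `X` and `Y`. -/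

lemma mul_pow_eq_pow_mul_add_sum_of_mul_eq_mul_add_one {A : Type*} [Semiring A] {σ X Y : A}
    (h : σ * X = Y * σ + 1) (m : ℕ) :
    σ * X ^ m = Y ^ m * σ + ∑ i ∈ Finset.range m, Y ^ i * X ^ (m - i - 1) := by
  induction m with
  | zero => simp
  | succ m ih =>
    have hshift : ∀ i ∈ Finset.range m,
        Y ^ i * X ^ (m - i - 1) * X = Y ^ i * X ^ (m + 1 - i - 1) := fun i hi => by
      rw [mul_assoc, ← pow_succ]
      congr 2
      have := Finset.mem_range.mp hi
      omega
    calc σ * X ^ (m + 1)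
        = (Y ^ m * σ + ∑ i ∈ Finset.range m, Y ^ i * X ^ (m - i - 1)) * X := by
          rw [pow_succ, ← mul_assoc, ih]
      _ = Y ^ (m + 1) * σ + (∑ i ∈ Finset.range m, Y ^ i * X ^ (m + 1 - i - 1) + Y ^ m) := by
          rw [add_mul, mul_assoc, h, Finset.sum_mul, Finset.sum_congr rfl hshift, mul_add,
            ← mul_assoc, ← pow_succ, mul_one]
          abel
      _ = _ := by
          rw [Finset.sum_range_succ, show m + 1 - m - 1 = 0 by omega, pow_zero, mul_one]

lemma mul_sub_eq_sub_mul_add_one {A : Type*} [Ring A] {σ X Y : A} (h : σ * X = Y * σ + 1)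
    {c : A} (hc : Commute σ c) : σ * (X - c) = (Y - c) * σ + 1 := by
  rw [mul_sub, sub_mul, h, hc.eq]
  abel

lemma adjSwap_mul_swap_eq_swap_mul_adjSwap {n : ℕ} {j l : Fin n} (hlj : l ≠ j)
    (hl : l ≠ predIdx j) : adjSwap j * Equiv.swap l j = Equiv.swap l (predIdx j) * adjSwap j := by
  have hconj := Equiv.swap_apply_apply (adjSwap j) l j
  rw [adjSwap, Equiv.swap_apply_of_ne_of_ne hl hlj, Equiv.swap_apply_right, Equiv.swap_inv]
    at hconj
  rw [hconj, adjSwap, mul_assoc, Equiv.swap_mul_self, mul_one]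

section JucysMurphy

variable (R : Type) [CommRing R] {n : ℕ} {j : Fin n}

lemma predIdx_lt (hj : 1 ≤ j.val) : predIdx j < j := by
  change j.val - 1 < j.val
  omega

lemma jm_eq_sum_add_adjSwap (hj : 1 ≤ j.val) :
    jm R n j =
      ∑ l ∈ Finset.univ.filter (· < predIdx j), MonoidAlgebra.of R (SG n) (Equiv.swap l j) +
        MonoidAlgebra.of R (SG n) (adjSwap j) := by
  have hsplit : Finset.univ.filter (· < j) =
      insert (predIdx j) (Finset.univ.filter (· < predIdx j)) := by
    ext l
    simp only [Finset.mem_filter, Finset.mem_univ, true_and, Finset.mem_insert, Fin.lt_def,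
      Fin.ext_iff, predIdx]
    omega
  rw [jm, hsplit, Finset.sum_insert (by simp), add_comm, adjSwap]

lemma of_adjSwap_mul_jm (hj : 1 ≤ j.val) :
    MonoidAlgebra.of R (SG n) (adjSwap j) * jm R n j =
      jm R n (predIdx j) * MonoidAlgebra.of R (SG n) (adjSwap j) + 1 := by
  have hconj : ∀ l ∈ Finset.univ.filter (· < predIdx j),
      MonoidAlgebra.of R (SG n) (adjSwap j) * MonoidAlgebra.of R (SG n) (Equiv.swap l j) =
        MonoidAlgebra.of R (SG n) (Equiv.swap l (predIdx j)) *
          MonoidAlgebra.of R (SG n) (adjSwap j) := by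
    intro l hmem
    have hl : l < predIdx j := (Finset.mem_filter.mp hmem).2
    rw [← map_mul, ← map_mul,
      adjSwap_mul_swap_eq_swap_mul_adjSwap (hl.trans (predIdx_lt hj)).ne hl.ne]
  rw [jm_eq_sum_add_adjSwap R hj, mul_add, Finset.mul_sum, Finset.sum_congr rfl hconj,
    ← Finset.sum_mul, ← map_mul, adjSwap, Equiv.swap_mul_self, map_one, jm]

end JucysMurphy

theorem adjSwap_jm_pow_comm_general (p : ℕ) (hp : p.Prime) (n : ℕ)
    (j : Fin n) (hj : 1 ≤ j.val) (m : ℕ) (a : Rloc p hp) :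
    (MonoidAlgebra.of (Rloc p hp) (SG n) (adjSwap j) * (jm (Rloc p hp) n j) ^ m =
      (jm (Rloc p hp) n (predIdx j)) ^ m *
          MonoidAlgebra.of (Rloc p hp) (SG n) (adjSwap j) +
        ∑ i ∈ Finset.range m,
          (jm (Rloc p hp) n (predIdx j)) ^ i * (jm (Rloc p hp) n j) ^ (m - i - 1)) ∧
    (MonoidAlgebra.of (Rloc p hp) (SG n) (adjSwap j) *
        (jm (Rloc p hp) n j - a • (1 : GA (Rloc p hp) n)) ^ m =
      (jm (Rloc p hp) n (predIdx j) - a • (1 : GA (Rloc p hp) n)) ^ m *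
          MonoidAlgebra.of (Rloc p hp) (SG n) (adjSwap j) +
        ∑ i ∈ Finset.range m,
          (jm (Rloc p hp) n (predIdx j) - a • (1 : GA (Rloc p hp) n)) ^ i *
            (jm (Rloc p hp) n j - a • (1 : GA (Rloc p hp) n)) ^ (m - i - 1)) := by
  have hbase := of_adjSwap_mul_jm (Rloc p hp) hj
  have hshift := mul_sub_eq_sub_mul_add_one hbase ((Commute.one_right _).smul_right a)
  exact ⟨mul_pow_eq_pow_mul_add_sum_of_mul_eq_mul_add_one hbase m,
    mul_pow_eq_pow_mul_add_sum_of_mul_eq_mul_add_one hshift m⟩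

/-- For every natural number `m`, every `a ∈ R` and every `2 ≤ k ≤ n`
(with `j : Fin n` the index of the letter `k`), the following identities hold in `R Sₙ`:
(a) `σ_k L_k^m = L_{k-1}^m σ_k + ∑_{i=0}^{m-1} L_{k-1}^i L_k^{m-i-1}`;
(b) `σ_k (L_k - a)^m = (L_{k-1} - a)^m σ_k + ∑_{i=0}^{m-1} (L_{k-1}-a)^i (L_k-a)^{m-i-1}`. -/
theorem adjSwap_jm_pow_comm (p : ℕ) (hp : p.Prime) (n : ℕ) (hn : 0 < n)
    (j : Fin n) (hj : 1 ≤ j.val) (m : ℕ) (a : Rloc p hp) :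
    (MonoidAlgebra.of (Rloc p hp) (SG n) (adjSwap j) * (jm (Rloc p hp) n j) ^ m =
      (jm (Rloc p hp) n (predIdx j)) ^ m *
          MonoidAlgebra.of (Rloc p hp) (SG n) (adjSwap j) +
        ∑ i ∈ Finset.range m,
          (jm (Rloc p hp) n (predIdx j)) ^ i * (jm (Rloc p hp) n j) ^ (m - i - 1)) ∧
    (MonoidAlgebra.of (Rloc p hp) (SG n) (adjSwap j) *
        (jm (Rloc p hp) n j - a • (1 : GA (Rloc p hp) n)) ^ m =
      (jm (Rloc p hp) n (predIdx j) - a • (1 : GA (Rloc p hp) n)) ^ m *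
          MonoidAlgebra.of (Rloc p hp) (SG n) (adjSwap j) +
        ∑ i ∈ Finset.range m,
          (jm (Rloc p hp) n (predIdx j) - a • (1 : GA (Rloc p hp) n)) ^ i *
            (jm (Rloc p hp) n j - a • (1 : GA (Rloc p hp) n)) ^ (m - i - 1)) :=
  adjSwap_jm_pow_comm_general p hp n j hj m a

end SymmJM
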